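/- For every positive integer n there exists a multivariate polynomial p in n variables over the complex numbers having exactly 2^(n-1) nonzero monomials (i.e., its support has cardinality 2^(n-1)) such that the image of the hypercube {-1,1}^n under evaluation of p equals the set of all 2^n-th roots of unity {exp(2*pi*i*k/2^n) : k = 0, 1, ..., 2^n - 1}. -/

import Mathlib

/-!
Let `ζ` be a primitive `2^n`-th root of unity and take the product over `i < n` of the affine
polynomials `(1 + ζ^(2^i))/2 + (1 - ζ^(2^i))/2 · X i`, which equal `1` at `X i = 1` and `ζ^(2^i)` at
`X i = -1`. At the sign vector that is `-1` exactly on `T` the product is `ζ^(∑ i ∈ T, 2^i)`, and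
by binary expansion these exponents are exactly `0, …, 2^n - 1`. Expanding the product, distinct
sets of variables give distinct squarefree monomials, and all coefficients are nonzero except the
constant term of the last factor, which vanishes because `ζ^(2^(n-1)) = -1`: so exactly `n - 1`
factors double the number of monomials.
-/

open MvPolynomial Finset

namespace MvPolynomial

variable {σ : Type*}

section Support

variable {R : Type*} [CommRing R] [IsDomain R]

theorem card_support_mul_C_add_C_mul_X {p : MvPolynomial σ R} {i : σ} (hi : i ∉ p.vars)
    {a b : R} (ha : a ≠ 0) (hb : b ≠ 0) :
    #(p * (C a + C b * X i)).support = 2 * #p.support := by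
  classical
  have hdisj : Disjoint (a • p).support (b • (p * X i)).support := by
    rw [support_smul_eq ha, support_smul_eq hb, support_mul_X, Finset.disjoint_left]
    intro d hd hd'
    obtain ⟨e, -, rfl⟩ := mem_map.mp hd'
    exact hi ((mem_vars_iff_mem_support i).mpr ⟨_, hd, by simp⟩)
  have hunion : (a • p + b • (p * X i)).support = (a • p).support ∪ (b • (p * X i)).support :=
    Finsupp.support_add_eq hdisj
  rw [show p * (C a + C b * X i) = a • p + b • (p * X i) by simp only [smul_eq_C_mul]; ring,
    hunion, card_union_of_disjoint hdisj, support_smul_eq ha, support_smul_eq hb, support_mul_X,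
    card_map, two_mul]

theorem vars_C_add_C_mul_X_subset [DecidableEq σ] (a b : R) (i : σ) :
    (C a + C b * X i : MvPolynomial σ R).vars ⊆ {i} := by
  refine (vars_add_subset _ _).trans (union_subset (by simp [vars_C]) ?_)
  exact (vars_mul _ _).trans (by simp [vars_C, vars_X])

theorem card_support_prod_C_add_C_mul_X [DecidableEq σ] [DecidableEq R] (s : Finset σ)
    (a b : σ → R) (hb : ∀ i ∈ s, b i ≠ 0) :
    #(∏ i ∈ s, (C (a i) + C (b i) * X i)).support = 2 ^ #{i ∈ s | a i ≠ 0} := by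
  induction s using Finset.induction_on with
  | empty => simp
  | insert i s hi ih =>
    have hbi : b i ≠ 0 := hb i (mem_insert_self i s)
    specialize ih fun j hj => hb j (mem_insert_of_mem hj)
    rw [prod_insert hi, mul_comm, filter_insert]
    by_cases ha : a i = 0
    · rw [if_neg (not_not.mpr ha), ← ih, ha, C_0, zero_add, mul_left_comm, ← smul_eq_C_mul,
        support_smul_eq hbi, support_mul_X, card_map]
    · have hvars : i ∉ (∏ j ∈ s, (C (a j) + C (b j) * X j)).vars := fun h => by
        obtain ⟨j, hj, hij⟩ := mem_biUnion.mp (vars_prod _ h)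
        obtain rfl := mem_singleton.mp (vars_C_add_C_mul_X_subset _ _ _ hij)
        exact hi hj
      rw [if_pos ha, card_insert_of_notMem (fun h => hi (mem_filter.mp h).1), pow_succ, ← ih,
        card_support_mul_C_add_C_mul_X hvars ha hbi, mul_comm]

end Support

theorem eval_ite_mem_prod_C_add_C_mul_X {K : Type*} [Field K] [NeZero (2 : K)] [Fintype σ]
    [DecidableEq σ] (c : σ → K) (T : Finset σ) :
    eval (fun i => if i ∈ T then -1 else 1)
        (∏ i, (C ((1 + c i) / 2) + C ((1 - c i) / 2) * X i)) = ∏ i ∈ T, c i := by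
  rw [← univ_inter T, ← prod_ite_mem, eval_prod, univ_inter]
  refine prod_congr rfl fun i _ => ?_
  simp only [eval_add, eval_C, eval_mul, eval_X]
  split_ifs <;> field_simp <;> ring

end MvPolynomial

theorem setOf_forall_eq_one_or_eq_neg_one {σ M : Type*} [Fintype σ] [DecidableEq σ] [One M]
    [Neg M] :
    {s : σ → M | ∀ i, s i = 1 ∨ s i = -1} =
      Set.range fun T : Finset σ => fun i => if i ∈ T then -1 else 1 := by
  classical
  ext s
  constructor
  · intro hs
    refine ⟨univ.filter (s · = -1), funext fun i => ?_⟩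
    simp only [mem_filter, mem_univ, true_and]
    split_ifs with h
    · exact h.symm
    · exact ((hs i).resolve_right h).symm
  · rintro ⟨T, rfl⟩ i
    by_cases h : i ∈ T <;> simp [h]

theorem Nat.range_sum_two_pow_fin (n : ℕ) :
    Set.range (fun T : Finset (Fin n) => ∑ i ∈ T, 2 ^ (i : ℕ)) = Set.Iio (2 ^ n) := by
  ext k
  constructor
  · rintro ⟨T, rfl⟩
    exact (sum_map T Fin.valEmbedding (2 ^ ·)).symm.trans_lt (Nat.geomSum_lt le_rfl (by simp))
  · intro hk
    refine ⟨univ.filter fun i : Fin n => k.testBit i, ?_⟩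
    have hbits : (univ.filter fun i : Fin n => k.testBit i).map Fin.valEmbedding =
        k.bitIndices.toFinset := by
      ext j
      simp only [mem_map, mem_filter, mem_univ, true_and, Fin.valEmbedding_apply,
        List.mem_toFinset, Nat.mem_bitIndices]
      refine ⟨fun ⟨i, hi, hij⟩ => hij ▸ hi, fun hj => ⟨⟨j, ?_⟩, hj, rfl⟩⟩
      have := Nat.two_pow_le_of_mem_bitIndices (Nat.mem_bitIndices.mpr hj)
      exact (Nat.pow_lt_pow_iff_right (by norm_num)).mp (this.trans_lt hk)
    exact (sum_map _ Fin.valEmbedding (2 ^ ·)).symm.trans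
      (by rw [hbits, sum_toFinset_bitIndices_two_pow])

theorem IsPrimitiveRoot.pow_two_pow_eq_neg_one_iff {R : Type*} [CommRing R] [IsDomain R] {ζ : R}
    {n i : ℕ} (hζ : IsPrimitiveRoot ζ (2 ^ n)) (hi : i < n) : ζ ^ 2 ^ i = -1 ↔ i + 1 = n := by
  constructor
  · intro h
    have : ζ ^ 2 ^ (i + 1) = 1 := by rw [pow_succ, pow_mul, h, neg_one_sq]
    have := (Nat.pow_dvd_pow_iff_le_right (by norm_num)).mp ((hζ.pow_eq_one_iff_dvd _).mp this)
    omega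
  · rintro rfl
    apply IsPrimitiveRoot.eq_neg_one_of_two_right
    simpa [pow_succ, Nat.pow_div] using
      hζ.pow_of_dvd (p := 2 ^ i) (by positivity) (pow_dvd_pow 2 hi.le)

theorem IsPrimitiveRoot.pow_two_pow_ne_one {M : Type*} [CommMonoid M] {ζ : M}
    {n i : ℕ} (hζ : IsPrimitiveRoot ζ (2 ^ n)) (hi : i < n) : ζ ^ 2 ^ i ≠ 1 := by
  rw [ne_eq, hζ.pow_eq_one_iff_dvd, Nat.pow_dvd_pow_iff_le_right (by norm_num)]
  omega

theorem Fin.card_filter_val_add_one_ne (n : ℕ) : #{i : Fin n | (i : ℕ) + 1 ≠ n} = n - 1 := by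
  cases n with
  | zero => simp
  | succ m =>
    rw [filter_congr (q := (· ≠ Fin.last m)) (fun i _ => by simp [Fin.ext_iff]), filter_ne',
      card_erase_of_mem (mem_univ _), card_univ, Fintype.card_fin]

section PhasePolynomial

variable {K : Type*} [Field K] [NeZero (2 : K)]

noncomputable def phasePolynomial (ζ : K) (n : ℕ) : MvPolynomial (Fin n) K :=
  ∏ i : Fin n, (C ((1 + ζ ^ 2 ^ (i : ℕ)) / 2) + C ((1 - ζ ^ 2 ^ (i : ℕ)) / 2) * X i)

theorem card_support_phasePolynomial {ζ : K} {n : ℕ} (hζ : IsPrimitiveRoot ζ (2 ^ n)) :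
    #(phasePolynomial ζ n).support = 2 ^ (n - 1) := by
  classical
  rw [phasePolynomial, card_support_prod_C_add_C_mul_X _ _ _ fun i _ =>
      div_ne_zero (sub_ne_zero.mpr (hζ.pow_two_pow_ne_one i.isLt).symm) two_ne_zero,
    ← Fin.card_filter_val_add_one_ne]
  congr 2
  ext i
  simp [add_eq_zero_iff_eq_neg', hζ.pow_two_pow_eq_neg_one_iff i.isLt, two_ne_zero]

theorem image_eval_phasePolynomial (ζ : K) (n : ℕ) :
    (fun s => eval s (phasePolynomial ζ n)) '' {s | ∀ i, s i = 1 ∨ s i = -1} =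
      (ζ ^ ·) '' Set.Iio (2 ^ n) := by
  classical
  have heval (T : Finset (Fin n)) :
      eval (fun i => if i ∈ T then -1 else 1) (phasePolynomial ζ n) =
        ζ ^ ∑ i ∈ T, 2 ^ (i : ℕ) := by
    rw [phasePolynomial, eval_ite_mem_prod_C_add_C_mul_X, prod_pow_eq_pow_sum]
  rw [setOf_forall_eq_one_or_eq_neg_one, ← Set.range_comp, Function.comp_def]
  simp_rw [heval]
  rw [Set.range_comp' (ζ ^ ·), Nat.range_sum_two_pow_fin]

end PhasePolynomial

theorem phase_encoding (n : ℕ) :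
    ∃ p : MvPolynomial (Fin n) ℂ,
      p.support.card = 2 ^ (n - 1) ∧
      (fun s : Fin n → ℂ => MvPolynomial.eval s p) ''
          {s : Fin n → ℂ | ∀ i, s i = 1 ∨ s i = -1} =
        {z : ℂ | ∃ k : ℕ, k < 2 ^ n ∧
          z = Complex.exp (2 * Real.pi * Complex.I * k / 2 ^ n)} := by
  set ζ : ℂ := Complex.exp (2 * Real.pi * Complex.I / 2 ^ n)
  have hζ : IsPrimitiveRoot ζ (2 ^ n) := by
    simpa using Complex.isPrimitiveRoot_exp (2 ^ n) (by positivity)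
  have hpow (k : ℕ) : ζ ^ k = Complex.exp (2 * Real.pi * Complex.I * k / 2 ^ n) := by
    rw [← Complex.exp_nat_mul]
    ring_nf
  refine ⟨phasePolynomial ζ n, card_support_phasePolynomial hζ, ?_⟩
  rw [image_eval_phasePolynomial]
  ext z
  simp only [Set.mem_image, Set.mem_Iio, hpow, eq_comm]
  rfl
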